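/- Let G be a connected simple graph on n ≥ 3 vertices. Define v(G) as the minimum cardinality of an independent set A of G such that N_G(A) is a vertex cover of G. Then v(G) ≤ γ_e(G), where γ_e(G) is the edge domination number of G, i.e., the minimum size of a maximal matching of G. -/

import Mathlib

open MvPolynomial

namespace PaperRV

variable {V : Type*}

/-- `A` is an independent set of `G`. -/
def IsIndep (G : SimpleGraph V) (A : Set V) : Prop :=
  ∀ u ∈ A, ∀ v ∈ A, ¬ G.Adj u v

/-- The neighbourhood `N_G(A)` of a set of vertices `A`. -/
def nbhd (G : SimpleGraph V) (A : Set V) : Set V :=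
  {v | ∃ u ∈ A, G.Adj u v}

/-- `C` is a vertex cover of `G`. -/
def IsVertexCover (G : SimpleGraph V) (C : Set V) : Prop :=
  ∀ ⦃u v⦄, G.Adj u v → u ∈ C ∨ v ∈ C

/-- The v-number of (the edge ideal of) `G`: the minimum cardinality of an independent
set `A` such that `N_G(A)` is a vertex cover of `G`. -/
noncomputable def vNumber (G : SimpleGraph V) [Fintype V] : ℕ :=
  sInf {k | ∃ A : Finset V, IsIndep G ↑A ∧ IsVertexCover G (nbhd G ↑A) ∧ A.card = k}

/-- `M` is a matching of `G`: a set of pairwise disjoint edges. -/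
def IsMatching (G : SimpleGraph V) (M : Finset (Sym2 V)) : Prop :=
  (↑M : Set (Sym2 V)) ⊆ G.edgeSet ∧
    ∀ e ∈ M, ∀ f ∈ M, e ≠ f → ∀ v : V, v ∈ e → v ∉ f

/-- `M` is a maximal matching of `G`. -/
def IsMaximalMatching (G : SimpleGraph V) (M : Finset (Sym2 V)) : Prop :=
  IsMatching G M ∧ ∀ M', IsMatching G M' → M ⊆ M' → M' = M

/-- `M` is an induced matching of `G`: the only edges of `G` contained in the union
of the edges of `M` are those of `M`. -/
def IsInducedMatching (G : SimpleGraph V) (M : Finset (Sym2 V)) : Prop :=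
  IsMatching G M ∧ ∀ e ∈ G.edgeSet, (∀ v ∈ e, ∃ f ∈ M, v ∈ f) → e ∈ M

/-- The edge domination number `γ_e(G)`: the minimum size of a maximal matching. -/
noncomputable def edgeDomNum (G : SimpleGraph V) [Fintype V] : ℕ :=
  sInf {k | ∃ M, IsMaximalMatching G M ∧ M.card = k}

/-!
Fix a maximal matching `M` and let `S` be the set of vertices it covers. By maximality
`S` is a vertex cover. Choose `A ⊆ S` maximal among independent subsets of `S`: every vertex
of `S \ A` then has a neighbour in `A`, so `N(A)` contains `S \ A` and, for each edge leaving
`A`, its other endpoint; hence `N(A)` is a vertex cover. An edge contains at most one vertex of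
an independent set, so `|A| ≤ |M|`.
-/

def coveredVerts (M : Finset (Sym2 V)) : Set V :=
  {v | ∃ e ∈ M, v ∈ e}

lemma IsMatching.empty (G : SimpleGraph V) : IsMatching G ∅ := by
  simp [IsMatching]

lemma IsMatching.insert [DecidableEq V] {G : SimpleGraph V} {M : Finset (Sym2 V)}
    (hM : IsMatching G M) {u w : V} (huw : G.Adj u w) (hu : u ∉ coveredVerts M)
    (hw : w ∉ coveredVerts M) :
    IsMatching G (insert s(u, w) M) := by
  obtain ⟨hMsub, hMdisj⟩ := hM
  have hfree : ∀ e ∈ M, ∀ v ∈ s(u, w), v ∉ e := by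
    intro e he v hv hve
    rcases Sym2.mem_iff.1 hv with rfl | rfl
    exacts [hu ⟨e, he, hve⟩, hw ⟨e, he, hve⟩]
  refine ⟨?_, ?_⟩
  · rw [Finset.coe_insert]
    exact Set.insert_subset huw hMsub
  · intro e he f hf hef v hve
    rcases Finset.mem_insert.1 he with rfl | he <;> rcases Finset.mem_insert.1 hf with rfl | hf
    · exact absurd rfl hef
    · exact hfree f hf v hve
    · exact fun hvf => hfree e he v hvf hve
    · exact hMdisj e he f hf hef v hve

lemma exists_isMaximalMatching [Finite V] (G : SimpleGraph V) :
    ∃ M, IsMaximalMatching G M := by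
  obtain ⟨M, -, hM⟩ := Finite.exists_le_maximal (IsMatching.empty G)
  exact ⟨M, hM.prop, fun M' hM' hMM' => le_antisymm (hM.le_of_ge hM' hMM') hMM'⟩

lemma IsMaximalMatching.isVertexCover {G : SimpleGraph V} {M : Finset (Sym2 V)}
    (hM : IsMaximalMatching G M) : IsVertexCover G (coveredVerts M) := by
  classical
  intro u w huw
  by_contra! h
  have hmatch := hM.1.insert huw h.1 h.2
  have hins : insert s(u, w) M = M := hM.2 _ hmatch (Finset.subset_insert _ _)
  exact h.1 ⟨_, hins ▸ Finset.mem_insert_self _ _, Sym2.mem_mk_left u w⟩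

lemma isVertexCover_nbhd {G : SimpleGraph V} {S A : Set V} (hS : IsVertexCover G S)
    (hdom : ∀ u ∈ S, u ∉ A → u ∈ nbhd G A) : IsVertexCover G (nbhd G A) := by
  have hcover : ∀ ⦃u w⦄, G.Adj u w → u ∈ S → u ∈ nbhd G A ∨ w ∈ nbhd G A := by
    intro u w huw huS
    by_cases huA : u ∈ A
    · exact Or.inr ⟨u, huA, huw⟩
    · exact Or.inl (hdom u huS huA)
  intro u w huw
  rcases hS huw with huS | hwS
  · exact hcover huw huS
  · exact (hcover huw.symm hwS).symm

lemma mem_nbhd_of_maximal_isIndep {G : SimpleGraph V} {S : Set V} {A : Finset V}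
    (hA : Maximal (fun B : Finset V => ↑B ⊆ S ∧ IsIndep G ↑B) A) {u : V} (huS : u ∈ S)
    (huA : u ∉ A) : u ∈ nbhd G ↑A := by
  classical
  by_contra! h
  have hnadj : ∀ a ∈ A, ¬ G.Adj a u := fun a ha hau => h ⟨a, ha, hau⟩
  have hins : ↑(insert u A) ⊆ S ∧ IsIndep G ↑(insert u A) := by
    refine ⟨?_, ?_⟩
    · rw [Finset.coe_insert]
      exact Set.insert_subset huS hA.prop.1
    · intro x hx y hy
      rw [Finset.coe_insert] at hx hy
      rcases hx with rfl | hx <;> rcases hy with rfl | hy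
      · exact G.loopless.irrefl _
      · exact fun hxy => hnadj y hy hxy.symm
      · exact hnadj x hx
      · exact hA.prop.2 x hx y hy
  exact huA (hA.le_of_ge hins (Finset.subset_insert u A) (Finset.mem_insert_self u A))

lemma IsIndep.card_le_card_of_subset_edgeSet {G : SimpleGraph V} {A : Finset V}
    {M : Finset (Sym2 V)} (hA : IsIndep G ↑A) (hM : ↑M ⊆ G.edgeSet)
    (hAM : ↑A ⊆ coveredVerts M) : A.card ≤ M.card := by
  refine Finset.card_le_card_of_forall_subsingleton (· ∈ ·) (fun a ha => hAM ha) ?_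
  rintro e he a ⟨ha, hae⟩ b ⟨hb, hbe⟩
  by_contra hab
  have hadj : G.Adj a b := by
    rw [← SimpleGraph.mem_edgeSet, ← (Sym2.mem_and_mem_iff hab).1 ⟨hae, hbe⟩]
    exact hM he
  exact hA a ha b hb hadj

lemma IsMaximalMatching.exists_isIndep_isVertexCover_nbhd [Finite V] {G : SimpleGraph V}
    {M : Finset (Sym2 V)} (hM : IsMaximalMatching G M) :
    ∃ A : Finset V, IsIndep G ↑A ∧ IsVertexCover G (nbhd G ↑A) ∧ A.card ≤ M.card := by
  obtain ⟨A, -, hA⟩ := Finite.exists_le_maximal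
    (p := fun B : Finset V => ↑B ⊆ coveredVerts M ∧ IsIndep G ↑B) (a := ∅)
    (by simp [IsIndep])
  refine ⟨A, hA.prop.2, ?_, hA.prop.2.card_le_card_of_subset_edgeSet hM.1.1 hA.prop.1⟩
  exact isVertexCover_nbhd hM.isVertexCover fun _ huS huA =>
    mem_nbhd_of_maximal_isIndep hA huS huA

theorem stmt1_general {V : Type*} [Fintype V] (G : SimpleGraph V) :
    vNumber G ≤ edgeDomNum G := by
  obtain ⟨M₀, hM₀⟩ := exists_isMaximalMatching G
  obtain ⟨M, hM, hMcard⟩ :=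
    Nat.sInf_mem (s := {k | ∃ M, IsMaximalMatching G M ∧ M.card = k}) ⟨_, M₀, hM₀, rfl⟩
  obtain ⟨A, hAindep, hAcover, hAcard⟩ := hM.exists_isIndep_isVertexCover_nbhd
  calc vNumber G ≤ A.card := Nat.sInf_le ⟨A, hAindep, hAcover, rfl⟩
    _ ≤ M.card := hAcard
    _ = edgeDomNum G := hMcard

/-- For a connected graph `G` on `n ≥ 3` vertices, `v(G) ≤ γ_e(G)`. -/
theorem stmt1 {V : Type*} [Fintype V] (G : SimpleGraph V) (hn : 3 ≤ Fintype.card V)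
    (hG : G.Connected) :
    vNumber G ≤ edgeDomNum G :=
  stmt1_general G

end PaperRV
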